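/- arXiv:math/0610792 — 7 statements merged into one kernel-verified Lean document; each statement's English description precedes it below -/
import Mathlib

section
/- Let p2, p3, p4, p5 be points of ℝ² with no three of them collinear, and suppose p4 lies in the interior of the triangle conv{p2, p3, p5}. Then the intersection of the triangle conv{p2, p3, p4} with the triangle conv{p3, p4, p5} is exactly the closed segment [p3, p4]. -/
noncomputable section

/-- The plane ℝ². -/
abbrev Plane := EuclideanSpace ℝ (Fin 2)

/-- No three of the points `f 0, …, f (n-1)` are collinear. -/
def NoThreeCollinear {n : ℕ} (f : Fin n → Plane) : Prop :=
  ∀ i j k : Fin n, i ≠ j → i ≠ k → j ≠ k → ¬ Collinear ℝ ({f i, f j, f k} : Set Plane)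

open Finset

lemma range_triple (a b c : Plane) : Set.range ![a, b, c] = {a, b, c} := by
  ext x; simp [Matrix.range_cons, Matrix.range_empty]; tauto

def basisOf (a b c : Plane) (h : ¬ Collinear ℝ ({a, b, c} : Set Plane)) :
    AffineBasis (Fin 3) ℝ Plane :=
  ⟨![a, b, c], affineIndependent_iff_not_collinear_set.mpr h, by
    rw [(affineIndependent_iff_not_collinear_set.mpr h).affineSpan_eq_top_iff_card_eq_finrank_add_one]
    simp⟩

@[simp] lemma basisOf_pts (a b c : Plane) (h) : (basisOf a b c h : Fin 3 → Plane) = ![a, b, c] := rfl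

lemma affmap_coords (B : AffineBasis (Fin 3) ℝ Plane) (L : Plane →ᵃ[ℝ] ℝ) (x : Plane) :
    L x = B.coord 0 x * L (B 0) + B.coord 1 x * L (B 1) + B.coord 2 x * L (B 2) := by
  have h1 : (univ : Finset (Fin 3)).sum (fun i => B.coord i x) = 1 :=
    B.sum_coord_apply_eq_one x
  conv_lhs => rw [← B.affineCombination_coord_eq_self x]
  rw [Finset.map_affineCombination _ _ _ h1,
    Finset.affineCombination_eq_linear_combination _ _ _ h1, Fin.sum_univ_three]
  simp [smul_eq_mul]

/-- If no three of `p2, p3, p4, p5` are collinear and `p4` lies in the interior of the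
triangle `p2 p3 p5`, then the triangles `p2 p3 p4` and `p3 p4 p5` intersect exactly in
the closed segment `[p3, p4]`. -/
theorem triangle_inter_triangle_of_interior_point
    (p2 p3 p4 p5 : Plane)
    (hcol : NoThreeCollinear ![p2, p3, p4, p5])
    (h4 : p4 ∈ interior (convexHull ℝ ({p2, p3, p5} : Set Plane))) :
    convexHull ℝ ({p2, p3, p4} : Set Plane) ∩ convexHull ℝ ({p3, p4, p5} : Set Plane)
      = segment ℝ p3 p4 := by
  have h234 : ¬ Collinear ℝ ({p2, p3, p4} : Set Plane) := by
    have := hcol 0 1 2 (by decide) (by decide) (by decide); simpa using this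
  have h235 : ¬ Collinear ℝ ({p2, p3, p5} : Set Plane) := by
    have := hcol 0 1 3 (by decide) (by decide) (by decide); simpa using this
  have h345 : ¬ Collinear ℝ ({p3, p4, p5} : Set Plane) := by
    have := hcol 1 2 3 (by decide) (by decide) (by decide); simpa using this
  set B234 := basisOf p2 p3 p4 h234 with hB234
  set B235 := basisOf p2 p3 p5 h235 with hB235
  set B345 := basisOf p3 p4 p5 h345 with hB345
  set L : Plane →ᵃ[ℝ] ℝ := B234.coord 0 with hL
  have hB234p : ∀ i, B234 i = ![p2, p3, p4] i := fun i => rfl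
  have hLp2 : L p2 = 1 := by
    have := B234.coord_apply_eq 0; rwa [hB234p 0] at this
  have hLp3 : L p3 = 0 := by
    have := B234.coord_apply_ne (i := 0) (j := 1) (by decide); rwa [hB234p 1] at this
  have hLp4 : L p4 = 0 := by
    have := B234.coord_apply_ne (i := 0) (j := 2) (by decide); rwa [hB234p 2] at this
  -- positive barycentric coords of p4 in triangle 235
  have h4pos : ∀ i, 0 < B235.coord i p4 := by
    have hr : ({p2, p3, p5} : Set Plane) = Set.range ⇑B235 := by
      rw [← range_triple]; rfl
    rw [hr, B235.interior_convexHull] at h4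
    exact h4
  have hLp5 : L p5 < 0 := by
    have h := affmap_coords B235 L p4
    rw [show B235 0 = p2 from rfl, show B235 1 = p3 from rfl, show B235 2 = p5 from rfl,
      hLp2, hLp3, hLp4] at h
    have h0 := h4pos 0
    have h2 := h4pos 2
    nlinarith
  apply Set.Subset.antisymm
  · rintro x ⟨hx1, hx2⟩
    have hr1 : ({p2, p3, p4} : Set Plane) = Set.range ⇑B234 := by
      rw [← range_triple]; rfl
    have hr2 : ({p3, p4, p5} : Set Plane) = Set.range ⇑B345 := by
      rw [← range_triple]; rfl
    rw [hr1, B234.convexHull_eq_nonneg_coord] at hx1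
    rw [hr2, B345.convexHull_eq_nonneg_coord] at hx2
    have hLx_le : L x ≤ 0 := by
      have h := affmap_coords B345 L x
      rw [show B345 0 = p3 from rfl, show B345 1 = p4 from rfl, show B345 2 = p5 from rfl,
        hLp3, hLp4] at h
      have := hx2 2
      nlinarith
    have hc0 : B234.coord 0 x = 0 := le_antisymm hLx_le (hx1 0)
    have hsum : (univ : Finset (Fin 3)).sum (fun i => B234.coord i x) = 1 :=
      B234.sum_coord_apply_eq_one x
    have hx : x = B234.coord 0 x • p2 + B234.coord 1 x • p3 + B234.coord 2 x • p4 := by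
      conv_lhs => rw [← B234.affineCombination_coord_eq_self x]
      rw [Finset.affineCombination_eq_linear_combination _ _ _ hsum, Fin.sum_univ_three]
      rfl
    rw [hc0, zero_smul, zero_add] at hx
    have hsum' : B234.coord 1 x + B234.coord 2 x = 1 := by
      rw [Fin.sum_univ_three, hc0, zero_add] at hsum; exact hsum
    exact ⟨B234.coord 1 x, B234.coord 2 x, hx1 1, hx1 2, hsum', hx.symm⟩
  · rw [← convexHull_pair]
    intro x hx
    exact ⟨convexHull_mono (by intro y hy; simp at hy ⊢; tauto) hx,
      convexHull_mono (by intro y hy; simp at hy ⊢; tauto) hx⟩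
end
end

section
/- Let a, b, c, d be four points of ℝ² in convex position listed in cyclic order a, b, c, d, and let x be a point in the interior of the quadrilateral conv{a, b, c, d}, with no three of the five points collinear. Then the intersection of the triangle conv{x, a, b} with the triangle conv{x, c, d} is exactly the single point {x}. -/
noncomputable section

/-- The determinant of two vectors of the plane. -/
def det2 (u v : Plane) : ℝ := u 0 * v 1 - u 1 * v 0

/-- The points `f 0, …, f (n-1)` are in convex position: no point of the family lies
in the convex hull of the remaining ones. -/
def ConvexPosition {n : ℕ} (f : Fin n → Plane) : Prop :=
  ∀ i : Fin n, f i ∉ convexHull ℝ (f '' {j | j ≠ i})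

/-- The points `f 0, …, f (n-1)` are listed in cyclic order: for every pair of
consecutive points (indices mod `n`), all remaining points of the family lie strictly
on one side of the line through that pair. -/
def CyclicOrder {n : ℕ} (f : Fin (n + 1) → Plane) : Prop :=
  ∀ i : Fin (n + 1),
    (∀ j, j ≠ i → j ≠ i + 1 → 0 < det2 (f (i + 1) - f i) (f j - f i)) ∨
    (∀ j, j ≠ i → j ≠ i + 1 → det2 (f (i + 1) - f i) (f j - f i) < 0)

-- affine combination lemma
lemma det2_aff (u v p q : Plane) (t s : ℝ) (h : t + s = 1) :
    det2 u (t • p + s • q - v) = t * det2 u (p - v) + s * det2 u (q - v) := by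
  have hs : s = 1 - t := by linarith
  subst hs
  simp only [det2, PiLp.add_apply, PiLp.sub_apply, PiLp.smul_apply, smul_eq_mul]
  ring

lemma det2_self (v : Plane) : det2 v v = 0 := by simp [det2]; ring

-- halfplane positivity at interior points
lemma interior_det_pos (u v x : Plane) (S : Set Plane)
    (hu : ∃ z : Plane, det2 u z ≠ 0)
    (hS : ∀ p ∈ S, 0 ≤ det2 u (p - v))
    (hx : x ∈ interior (convexHull ℝ S)) :
    0 < det2 u (x - v) := by
  have hcvx : Convex ℝ {p : Plane | 0 ≤ det2 u (p - v)} := by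
    intro p hp q hq t s ht hs hts
    simp only [Set.mem_setOf_eq] at hp hq ⊢
    rw [det2_aff u v p q t s hts]
    have := mul_nonneg ht hp
    have := mul_nonneg hs hq
    linarith
  have hhull : convexHull ℝ S ⊆ {p : Plane | 0 ≤ det2 u (p - v)} :=
    convexHull_min hS hcvx
  have hx0 : 0 ≤ det2 u (x - v) := hhull (interior_subset hx)
  rcases hx0.lt_or_eq with h | h
  · exact h
  exfalso
  -- u ≠ 0 componentwise
  have hune : u 0 ≠ 0 ∨ u 1 ≠ 0 := by
    by_contra hc
    push_neg at hc
    obtain ⟨z, hz⟩ := hu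
    exact hz (by simp [det2, hc.1, hc.2])
  set w : Plane := (WithLp.equiv 2 (Fin 2 → ℝ)).symm ![u 1, -u 0] with hw
  have hw0 : w 0 = u 1 := rfl
  have hw1 : w 1 = -u 0 := rfl
  have hdw : det2 u w < 0 := by
    simp only [det2, hw0, hw1]
    rcases hune with h' | h' <;>
      nlinarith [mul_self_pos.mpr h', mul_self_nonneg (u 0), mul_self_nonneg (u 1)]
  obtain ⟨ε, hε, hball⟩ := Metric.mem_nhds_iff.mp (mem_interior_iff_mem_nhds.mp hx)
  set δ : ℝ := ε / (‖w‖ + 1) with hδ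
  have hwn : (0:ℝ) < ‖w‖ + 1 := by positivity
  have hδpos : 0 < δ := by positivity
  have hd : dist (x + δ • w) x < ε := by
    have he : dist (x + δ • w) x = ‖δ • w‖ := by
      rw [dist_eq_norm]; congr 1; abel
    rw [he, norm_smul, Real.norm_eq_abs, abs_of_pos hδpos]
    calc δ * ‖w‖ < δ * (‖w‖ + 1) := by nlinarith
      _ = ε := by rw [hδ]; exact div_mul_cancel₀ ε (by positivity)
  have h2 : 0 ≤ det2 u (x + δ • w - v) := hhull (hball (Metric.mem_ball.mpr hd))
  have h3 : det2 u (x + δ • w - v) = det2 u (x - v) + δ * det2 u w := by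
    simp only [det2, PiLp.add_apply, PiLp.sub_apply, PiLp.smul_apply, smul_eq_mul]
    ring
  rw [h3, ← h] at h2
  nlinarith

-- triangle side lemma
lemma tri_side (F : Plane → ℝ)
    (haff : ∀ (p q : Plane) (t s : ℝ), t + s = 1 → F (t • p + s • q) = t * F p + s * F q)
    (x a b : Plane) (hFx : F x = 0) (hFa : F a < 0) (hFb : F b < 0) :
    ∀ p ∈ convexHull ℝ ({x, a, b} : Set Plane), F p ≤ 0 ∧ (F p = 0 → p = x) := by
  intro p hp
  rw [show ({x, a, b} : Set Plane) = insert x {a, b} from rfl,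
    convexHull_insert (by exact ⟨a, by simp⟩), convexHull_pair,
    mem_convexJoin] at hp
  obtain ⟨x', hx', z, hz, hpz⟩ := hp
  have hxx : x' = x := hx'
  rw [hxx] at hpz
  simp only [segment, Set.mem_setOf_eq] at hz hpz
  obtain ⟨t, s, ht, hs, hts, rfl⟩ := hz
  obtain ⟨u', v', hu', hv', huv, rfl⟩ := hpz
  have hFz : F (t • a + s • b) < 0 := by
    rw [haff a b t s hts]
    rcases ht.lt_or_eq with htp | hte
    · nlinarith
    · nlinarith [hte.symm]
  have hFp : F (u' • x + v' • (t • a + s • b)) = v' * F (t • a + s • b) := by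
    rw [haff x _ u' v' huv, hFx]; ring
  constructor
  · rw [hFp]; nlinarith
  · intro h0
    rw [hFp] at h0
    have hv0 : v' = 0 := by
      rcases hv'.lt_or_eq with h' | h'
      · exfalso; nlinarith
      · exact h'.symm
    have hu1 : u' = 1 := by linarith
    rw [hv0, hu1]; simp

lemma inter_eq (F : Plane → ℝ)
    (haff : ∀ (p q : Plane) (t s : ℝ), t + s = 1 → F (t • p + s • q) = t * F p + s * F q)
    (x a b c d : Plane)
    (hFx : F x = 0) (hFa : F a < 0) (hFb : F b < 0) (hFc : 0 < F c) (hFd : 0 < F d) :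
    convexHull ℝ ({x, a, b} : Set Plane) ∩ convexHull ℝ ({x, c, d} : Set Plane) = {x} := by
  apply Set.Subset.antisymm
  · rintro p ⟨h1, h2⟩
    have A := tri_side F haff x a b hFx hFa hFb p h1
    have B := tri_side (fun q => -F q)
      (by intro p q t s h; simp only [haff p q t s h]; ring) x c d
      (by simp [hFx]) (by simpa using hFc) (by simpa using hFd) p h2
    have h0 : F p = 0 := by
      have := B.1
      simp only [neg_nonpos] at this
      linarith [A.1]
    rw [Set.mem_singleton_iff]
    exact A.2 h0
  · intro p hp
    rw [Set.mem_singleton_iff] at hp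
    subst hp
    exact ⟨subset_convexHull _ _ (by simp), subset_convexHull _ _ (by simp)⟩

lemma det2_zero_right (u v : Plane) : det2 u (v - v) = 0 := by
  simp [det2]

lemma det2_neg_left (u w : Plane) : det2 (-u) w = -det2 u w := by
  simp only [det2, PiLp.neg_apply]; ring

theorem triangle_inter_triangle_at_interior_point'
    (a b c d x : Plane)
    (hcyc : CyclicOrder ![a, b, c, d])
    (hx : x ∈ interior (convexHull ℝ ({a, b, c, d} : Set Plane))) :
    convexHull ℝ ({x, a, b} : Set Plane) ∩ convexHull ℝ ({x, c, d} : Set Plane)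
      = {x} := by
  set L : Plane → ℝ := fun p => det2 (b - a) (p - a) with hLdef
  set M : Plane → ℝ := fun p => det2 (d - c) (p - c) with hMdef
  -- evaluate cyclic order at i = 0
  have hL : (0 < L c ∧ 0 < L d ∧ 0 < L x) ∨ (L c < 0 ∧ L d < 0 ∧ L x < 0) := by
    rcases hcyc 0 with h | h
    · have hLc : 0 < L c := h 2 (by decide) (by decide)
      have hLd : 0 < L d := h 3 (by decide) (by decide)
      refine Or.inl ⟨hLc, hLd, ?_⟩
      refine interior_det_pos (b - a) a x _ ⟨c - a, ne_of_gt hLc⟩ ?_ hx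
      rintro p (rfl | rfl | rfl | rfl)
      · exact le_of_eq (det2_zero_right _ _).symm
      · exact le_of_eq (det2_self _).symm
      · exact le_of_lt hLc
      · exact le_of_lt hLd
    · have hLc : L c < 0 := h 2 (by decide) (by decide)
      have hLd : L d < 0 := h 3 (by decide) (by decide)
      refine Or.inr ⟨hLc, hLd, ?_⟩
      have key : 0 < det2 (-(b - a)) (x - a) := by
        refine interior_det_pos (-(b - a)) a x _
          ⟨c - a, by rw [det2_neg_left]; exact ne_of_gt (neg_pos.mpr hLc)⟩ ?_ hx
        rintro p (rfl | rfl | rfl | rfl) <;> rw [det2_neg_left]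
        · exact le_of_eq (by rw [det2_zero_right]; ring)
        · exact le_of_eq (by rw [det2_self]; ring)
        · exact le_of_lt (neg_pos.mpr hLc)
        · exact le_of_lt (neg_pos.mpr hLd)
      rw [det2_neg_left] at key
      have : L x = det2 (b - a) (x - a) := rfl
      linarith
  -- evaluate cyclic order at i = 2
  have hM : (0 < M a ∧ 0 < M b ∧ 0 < M x) ∨ (M a < 0 ∧ M b < 0 ∧ M x < 0) := by
    rcases hcyc 2 with h | h
    · have hMa : 0 < M a := h 0 (by decide) (by decide)
      have hMb : 0 < M b := h 1 (by decide) (by decide)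
      refine Or.inl ⟨hMa, hMb, ?_⟩
      refine interior_det_pos (d - c) c x _ ⟨a - c, ne_of_gt hMa⟩ ?_ hx
      rintro p (rfl | rfl | rfl | rfl)
      · exact le_of_lt hMa
      · exact le_of_lt hMb
      · exact le_of_eq (det2_zero_right _ _).symm
      · exact le_of_eq (det2_self _).symm
    · have hMa : M a < 0 := h 0 (by decide) (by decide)
      have hMb : M b < 0 := h 1 (by decide) (by decide)
      refine Or.inr ⟨hMa, hMb, ?_⟩
      have key : 0 < det2 (-(d - c)) (x - c) := by
        refine interior_det_pos (-(d - c)) c x _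
          ⟨a - c, by rw [det2_neg_left]; exact ne_of_gt (neg_pos.mpr hMa)⟩ ?_ hx
        rintro p (rfl | rfl | rfl | rfl) <;> rw [det2_neg_left]
        · exact le_of_lt (neg_pos.mpr hMa)
        · exact le_of_lt (neg_pos.mpr hMb)
        · exact le_of_eq (by rw [det2_zero_right]; ring)
        · exact le_of_eq (by rw [det2_self]; ring)
      rw [det2_neg_left] at key
      have : M x = det2 (d - c) (x - c) := rfl
      linarith
  -- the separating affine functional
  set F : Plane → ℝ := fun p => M x * L p - L x * M p with hFdef
  have haff : ∀ (p q : Plane) (t s : ℝ), t + s = 1 →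
      F (t • p + s • q) = t * F p + s * F q := by
    intro p q t s h
    simp only [hFdef, hLdef, hMdef]
    rw [det2_aff (b - a) a p q t s h, det2_aff (d - c) c p q t s h]
    ring
  have hFx : F x = 0 := by simp only [hFdef]; ring
  have hLa : L a = 0 := det2_zero_right _ _
  have hLb : L b = 0 := det2_self _
  have hMc : M c = 0 := det2_zero_right _ _
  have hMd : M d = 0 := det2_self _
  have hFa : F a = -(L x * M a) := by simp only [hFdef, hLa]; ring
  have hFb : F b = -(L x * M b) := by simp only [hFdef, hLb]; ring
  have hFc : F c = M x * L c := by simp only [hFdef, hMc]; ring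
  have hFd : F d = M x * L d := by simp only [hFdef, hMd]; ring
  rcases hL with ⟨hLc, hLd, hLx⟩ | ⟨hLc, hLd, hLx⟩ <;>
    rcases hM with ⟨hMa, hMb, hMx⟩ | ⟨hMa, hMb, hMx⟩
  · exact inter_eq F haff x a b c d hFx
      (by rw [hFa]; linarith [mul_pos hLx hMa])
      (by rw [hFb]; linarith [mul_pos hLx hMb])
      (by rw [hFc]; linarith [mul_pos hMx hLc])
      (by rw [hFd]; linarith [mul_pos hMx hLd])
  · refine inter_eq (fun p => -F p)
      (by intro p q t s h; simp only [haff p q t s h]; ring) x a b c d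
      (by simp [hFx]) ?_ ?_ ?_ ?_
    · show -F a < 0; rw [hFa]; linarith [mul_neg_of_pos_of_neg hLx hMa]
    · show -F b < 0; rw [hFb]; linarith [mul_neg_of_pos_of_neg hLx hMb]
    · show 0 < -F c; rw [hFc]; linarith [mul_neg_of_neg_of_pos hMx hLc]
    · show 0 < -F d; rw [hFd]; linarith [mul_neg_of_neg_of_pos hMx hLd]
  · refine inter_eq (fun p => -F p)
      (by intro p q t s h; simp only [haff p q t s h]; ring) x a b c d
      (by simp [hFx]) ?_ ?_ ?_ ?_
    · show -F a < 0; rw [hFa]; linarith [mul_neg_of_neg_of_pos hLx hMa]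
    · show -F b < 0; rw [hFb]; linarith [mul_neg_of_neg_of_pos hLx hMb]
    · show 0 < -F c; rw [hFc]; linarith [mul_neg_of_pos_of_neg hMx hLc]
    · show 0 < -F d; rw [hFd]; linarith [mul_neg_of_pos_of_neg hMx hLd]
  · exact inter_eq F haff x a b c d hFx
      (by rw [hFa]; linarith [mul_pos_of_neg_of_neg hLx hMa])
      (by rw [hFb]; linarith [mul_pos_of_neg_of_neg hLx hMb])
      (by rw [hFc]; linarith [mul_pos_of_neg_of_neg hMx hLc])
      (by rw [hFd]; linarith [mul_pos_of_neg_of_neg hMx hLd])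

/-- If `a, b, c, d` are in convex position listed in cyclic order `a, b, c, d`, `x` lies
in the interior of the quadrilateral `conv {a, b, c, d}`, and no three of the five points
are collinear, then the triangles `x a b` and `x c d` intersect exactly at `x`. -/
theorem triangle_inter_triangle_at_interior_point
    (a b c d x : Plane)
    (hcol : NoThreeCollinear ![a, b, c, d, x])
    (hconv : ConvexPosition ![a, b, c, d])
    (hcyc : CyclicOrder ![a, b, c, d])
    (hx : x ∈ interior (convexHull ℝ ({a, b, c, d} : Set Plane))) :
    convexHull ℝ ({x, a, b} : Set Plane) ∩ convexHull ℝ ({x, c, d} : Set Plane)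
      = {x} :=
  triangle_inter_triangle_at_interior_point' a b c d x hcyc hx
end
end

section
/- Let p3, p5, p4, p6 be four points of ℝ² in convex position listed in cyclic order p3, p5, p4, p6, with no three of p2, p3, p4, p5, p6 collinear, and suppose p2 lies in the interior of the triangle conv{p3, p5, p6}. Then the intersection of the triangle conv{p6, p2, p3} with the triangle conv{p4, p5, p6} is exactly the single point {p6}. -/
noncomputable section

/-! The diagonal p5p6 of the convex quadrilateral p3p5p4p6 strictly separates p3 from p4:
there is a linear functional f, constant on the line p5p6, with f p3 < f p6 < f p4. An
interior point p2 of the triangle p3p5p6 satisfies f p2 < f p6 as well, so the triangle p6p2p3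
meets the closed half-plane {f ≥ f p6}, which contains the triangle p4p5p6, only in p6. -/

@[simps]
def det2LinearMap (u : Plane) : Plane →ₗ[ℝ] ℝ where
  toFun := det2 u
  map_add' x y := by simp only [det2, PiLp.add_apply]; ring
  map_smul' r x := by simp only [det2, PiLp.smul_apply, smul_eq_mul, RingHom.id_apply]; ring

theorem CyclicOrder.det2_mul_det2_pos {n : ℕ} {f : Fin (n + 1) → Plane} (h : CyclicOrder f)
    (i : Fin (n + 1)) {j k : Fin (n + 1)} (hj : j ≠ i) (hj' : j ≠ i + 1) (hk : k ≠ i)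
    (hk' : k ≠ i + 1) :
    0 < det2 (f (i + 1) - f i) (f j - f i) * det2 (f (i + 1) - f i) (f k - f i) := by
  rcases h i with h | h
  · exact mul_pos (h j hj hj') (h k hk hk')
  · exact mul_pos_of_neg_of_neg (h j hj hj') (h k hk hk')

theorem CyclicOrder.exists_linearMap_separating {a b c d : Plane}
    (h : CyclicOrder ![a, b, c, d]) :
    ∃ f : Plane →ₗ[ℝ] ℝ, f b = f d ∧ f a < f d ∧ f d < f c := by
  set g := det2LinearMap (d - b)
  have hb : g b = g d := by simp only [g, det2LinearMap_apply, det2, PiLp.sub_apply]; ring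
  -- The orientations of abc and bca agree, and the cyclic order at the edges ab and bc
  -- compares them with those of abd and bcd.
  have hsep : (g a - g d) * (g c - g d) < 0 := by
    have h0 := h.det2_mul_det2_pos 0 (j := 2) (k := 3) (by decide) (by decide) (by decide)
      (by decide)
    have h1 := h.det2_mul_det2_pos 1 (j := 3) (k := 0) (by decide) (by decide) (by decide)
      (by decide)
    have e1 : det2 (b - a) (c - a) = det2 (c - b) (a - b) := by
      simp only [det2, PiLp.sub_apply]; ring
    have e2 : det2 (b - a) (d - a) = g a - g d := by
      simp only [g, det2LinearMap_apply, det2, PiLp.sub_apply]; ring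
    have e3 : det2 (c - b) (d - b) = -(g c - g d) := by
      simp only [g, det2LinearMap_apply, det2, PiLp.sub_apply]; ring
    simp only [Fin.isValue, Matrix.cons_val, zero_add, Fin.reduceAdd, e1, e2, e3] at h0 h1
    nlinarith [mul_pos h0 h1, sq_nonneg (det2 (c - b) (a - b))]
  rcases lt_or_gt_of_ne (left_ne_zero_of_mul hsep.ne) with ha | ha
  · exact ⟨g, hb, sub_neg.mp ha, sub_pos.mp (pos_of_mul_neg_right hsep ha.le)⟩
  · refine ⟨-g, by simp only [LinearMap.neg_apply, hb], ?_, ?_⟩ <;>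
      simp only [LinearMap.neg_apply, neg_lt_neg_iff]
    · exact sub_pos.mp ha
    · exact sub_neg.mp (neg_of_mul_neg_right hsep ha.le)

section SeparatingFunctional

variable {E : Type*} [AddCommGroup E] [Module ℝ E] (f : E →ₗ[ℝ] ℝ)

theorem LinearMap.eq_of_mem_segment_of_apply_le {o z x : E} (hz : f z < f o)
    (hx : x ∈ segment ℝ o z) (hox : f o ≤ f x) : x = o := by
  obtain ⟨u, v, -, hv, huv, rfl⟩ := hx
  have hfx : f (u • o + v • z) = f o - v * (f o - f z) := by
    rw [map_add, map_smul, map_smul, smul_eq_mul, smul_eq_mul]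
    linear_combination f o * huv
  obtain rfl : v = 0 := by
    by_contra hv0
    have := mul_pos (lt_of_le_of_ne hv (Ne.symm hv0)) (sub_pos.mpr hz)
    linarith
  obtain rfl : u = 1 := by linarith
  simp

theorem LinearMap.eq_of_mem_convexHull_triple_of_apply_le {o a b x : E} (ha : f a < f o)
    (hb : f b < f o) (hx : x ∈ convexHull ℝ {o, a, b}) (hox : f o ≤ f x) : x = o := by
  rw [convexHull_insert (Set.insert_nonempty a {b}), convexHull_pair,
    convexJoin_singleton_left, Set.mem_iUnion₂] at hx
  obtain ⟨z, hz, hxz⟩ := hx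
  have hfz : f z < f o := (convex_halfSpace_lt f.isLinear (f o)).segment_subset ha hb hz
  exact f.eq_of_mem_segment_of_apply_le hfz hxz hox

theorem LinearMap.convexHull_triple_inter_convexHull_triple_eq_singleton {o a b p q : E}
    (ha : f a < f o) (hb : f b < f o) (hp : f o ≤ f p) (hq : f o ≤ f q) :
    convexHull ℝ {o, a, b} ∩ convexHull ℝ {p, q, o} = {o} := by
  refine Set.eq_singleton_iff_unique_mem.mpr
    ⟨⟨subset_convexHull ℝ _ (by simp), subset_convexHull ℝ _ (by simp)⟩, ?_⟩
  rintro x ⟨hx, hx'⟩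
  have hside : convexHull ℝ {p, q, o} ⊆ {y | f o ≤ f y} := by
    refine convexHull_min ?_ (convex_halfSpace_ge f.isLinear (f o))
    rintro y (rfl | rfl | rfl) <;> simp [hp, hq]
  exact f.eq_of_mem_convexHull_triple_of_apply_le ha hb hx (hside hx')

theorem LinearMap.apply_lt_of_mem_interior [TopologicalSpace E] [IsTopologicalAddGroup E]
    [ContinuousSMul ℝ E] [T2Space E] [FiniteDimensional ℝ E] (hf : f ≠ 0)
    {s : Set E} {c : ℝ} (hs : s ⊆ {y | f y ≤ c}) {x : E} (hx : x ∈ interior s) : f x < c := by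
  have hopen := LinearMap.isOpenMap_of_finiteDimensional f (LinearMap.surjective hf)
  have himage : f '' interior s ⊆ Set.Iio c := by
    rw [← interior_Iic]
    exact (hopen.image_interior_subset s).trans
      (interior_mono (Set.image_subset_iff.mpr hs))
  exact himage ⟨x, hx, rfl⟩

end SeparatingFunctional

theorem triangle623_inter_triangle456_eq_vertex6_general
    (p2 p3 p4 p5 p6 : Plane)
    (hcyc : CyclicOrder ![p3, p5, p4, p6])
    (h2 : p2 ∈ interior (convexHull ℝ ({p3, p5, p6} : Set Plane))) :
    convexHull ℝ ({p6, p2, p3} : Set Plane) ∩ convexHull ℝ ({p4, p5, p6} : Set Plane)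
      = {p6} := by
  obtain ⟨f, h56, h36, h64⟩ := hcyc.exists_linearMap_separating
  have hf : f ≠ 0 := by rintro rfl; simp at h36
  have hside : convexHull ℝ {p3, p5, p6} ⊆ {y | f y ≤ f p6} := by
    refine convexHull_min ?_ (convex_halfSpace_le f.isLinear (f p6))
    rintro y (rfl | rfl | rfl) <;> simp [h36.le, h56]
  have h26 : f p2 < f p6 := f.apply_lt_of_mem_interior hf hside h2
  exact f.convexHull_triple_inter_convexHull_triple_eq_singleton h26 h36 h64.le h56.ge

/-- If `p3, p5, p4, p6` are in convex position listed in cyclic order `p3, p5, p4, p6`,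
no three of `p2, …, p6` are collinear, and `p2` lies in the interior of the triangle
`p3 p5 p6`, then the triangles `p6 p2 p3` and `p4 p5 p6` intersect exactly at `p6`. -/
theorem triangle623_inter_triangle456_eq_vertex6
    (p2 p3 p4 p5 p6 : Plane)
    (hcol : NoThreeCollinear ![p2, p3, p4, p5, p6])
    (hconv : ConvexPosition ![p3, p5, p4, p6])
    (hcyc : CyclicOrder ![p3, p5, p4, p6])
    (h2 : p2 ∈ interior (convexHull ℝ ({p3, p5, p6} : Set Plane))) :
    convexHull ℝ ({p6, p2, p3} : Set Plane) ∩ convexHull ℝ ({p4, p5, p6} : Set Plane)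
      = {p6} :=
  triangle623_inter_triangle456_eq_vertex6_general p2 p3 p4 p5 p6 hcyc h2
end
end

section
/- Let p3, p5, p4, p6 be four points of ℝ² in convex position listed in cyclic order p3, p5, p4, p6, with no three of p2, p3, p4, p5, p6 collinear, and suppose p2 lies in the interior of conv{p3, p4, p6} ∩ conv{p4, p5, p6}. Then the intersection of the triangle conv{p6, p2, p3} with the triangle conv{p3, p4, p5} is exactly the single point {p3}. -/
noncomputable section

/-- Membership in a triangle as a convex combination of the vertices. -/
lemma mem_tri {a b c x : Plane} :
    x ∈ convexHull ℝ ({a, b, c} : Set Plane) ↔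
    ∃ α β γ : ℝ, 0 ≤ α ∧ 0 ≤ β ∧ 0 ≤ γ ∧ α + β + γ = 1 ∧ α • a + β • b + γ • c = x := by
  constructor
  · intro hx
    rw [convexHull_insert (by simp : ({b, c} : Set Plane).Nonempty), convexHull_pair,
      mem_convexJoin] at hx
    obtain ⟨a', ha', z, hz, hxz⟩ := hx
    rw [Set.mem_singleton_iff] at ha'
    subst ha'
    obtain ⟨u, u', hu, hu', huu, hz⟩ := hz
    obtain ⟨t, t', ht, ht', htt, hx⟩ := hxz
    refine ⟨t, t' * u, t' * u', ht, by positivity, by positivity, by nlinarith, ?_⟩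
    rw [← hx, ← hz]
    module
  · rintro ⟨α, β, γ, hα, hβ, hγ, hs, rfl⟩
    have h := Finset.centerMass_mem_convexHull (Finset.univ : Finset (Fin 3))
      (w := ![α, β, γ]) (z := ![a, b, c]) (s := ({a, b, c} : Set Plane))
      (by intro i _; fin_cases i <;> simpa)
      (by simp [Fin.sum_univ_three, hs])
      (by intro i _; fin_cases i <;> simp)
    rwa [Finset.centerMass_eq_of_sum_1 _ _ (by simp [Fin.sum_univ_three, hs]),
      Fin.sum_univ_three] at h

/-- `det2` based at `p` is affine in its second argument. -/
lemma det2_combo (w p a b c : Plane) (α β γ : ℝ) (h : α + β + γ = 1) :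
    det2 w (α • a + β • b + γ • c - p)
      = α * det2 w (a - p) + β * det2 w (b - p) + γ * det2 w (c - p) := by
  have hγ : γ = 1 - α - β := by linarith
  subst hγ
  simp only [det2, PiLp.sub_apply, PiLp.add_apply, PiLp.smul_apply, smul_eq_mul]
  ring

/-- If `p3, p5, p4, p6` are in convex position listed in cyclic order `p3, p5, p4, p6`,
no three of `p2, …, p6` are collinear, and `p2` lies in the interior of
`conv {p3, p4, p6} ∩ conv {p4, p5, p6}`, then the triangles `p6 p2 p3` and `p3 p4 p5`
intersect exactly at `p3`. -/
theorem triangle623_inter_triangle345_eq_vertex3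
    (p2 p3 p4 p5 p6 : Plane)
    (hcol : NoThreeCollinear ![p2, p3, p4, p5, p6])
    (hconv : ConvexPosition ![p3, p5, p4, p6])
    (hcyc : CyclicOrder ![p3, p5, p4, p6])
    (h2 : p2 ∈ interior
      (convexHull ℝ ({p3, p4, p6} : Set Plane) ∩ convexHull ℝ ({p4, p5, p6} : Set Plane))) :
    convexHull ℝ ({p6, p2, p3} : Set Plane) ∩ convexHull ℝ ({p3, p4, p5} : Set Plane)
      = {p3} := by
  -- A = [p3 p5 p4], B = [p3 p5 p6], C = [p3 p4 p6]
  -- from cyclic order, A*B > 0 and B*C > 0, hence A*C > 0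
  have hAB : 0 < det2 (p5 - p3) (p4 - p3) * det2 (p5 - p3) (p6 - p3) := by
    rcases hcyc 0 with h | h
    · have k1 : 0 < det2 (p5 - p3) (p4 - p3) := h 2 (by decide) (by decide)
      have k2 : 0 < det2 (p5 - p3) (p6 - p3) := h 3 (by decide) (by decide)
      exact mul_pos k1 k2
    · have k1 : det2 (p5 - p3) (p4 - p3) < 0 := h 2 (by decide) (by decide)
      have k2 : det2 (p5 - p3) (p6 - p3) < 0 := h 3 (by decide) (by decide)
      exact mul_pos_of_neg_of_neg k1 k2
  have i1 : det2 (p3 - p6) (p5 - p6) = det2 (p5 - p3) (p6 - p3) := by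
    simp only [det2, PiLp.sub_apply, PiLp.add_apply, PiLp.smul_apply, smul_eq_mul]; ring
  have i2 : det2 (p3 - p6) (p4 - p6) = det2 (p4 - p3) (p6 - p3) := by
    simp only [det2, PiLp.sub_apply, PiLp.add_apply, PiLp.smul_apply, smul_eq_mul]; ring
  have hBC : 0 < det2 (p5 - p3) (p6 - p3) * det2 (p4 - p3) (p6 - p3) := by
    rcases hcyc 3 with h | h
    · have k1 : 0 < det2 (p3 - p6) (p5 - p6) := h 1 (by decide) (by decide)
      have k2 : 0 < det2 (p3 - p6) (p4 - p6) := h 2 (by decide) (by decide)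
      rw [i1] at k1; rw [i2] at k2
      exact mul_pos k1 k2
    · have k1 : det2 (p3 - p6) (p5 - p6) < 0 := h 1 (by decide) (by decide)
      have k2 : det2 (p3 - p6) (p4 - p6) < 0 := h 2 (by decide) (by decide)
      rw [i1] at k1; rw [i2] at k2
      exact mul_pos_of_neg_of_neg k1 k2
  have hAC : 0 < det2 (p5 - p3) (p4 - p3) * det2 (p4 - p3) (p6 - p3) := by
    nlinarith [mul_pos hAB hBC, sq_nonneg (det2 (p5 - p3) (p6 - p3))]
  have hCne : det2 (p4 - p3) (p6 - p3) ≠ 0 := by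
    intro h
    rw [h, mul_zero] at hAC
    exact lt_irrefl _ hAC
  have hCC : 0 < det2 (p4 - p3) (p6 - p3) * det2 (p4 - p3) (p6 - p3) :=
    mul_self_pos.mpr hCne
  -- on the triangle p3 p4 p6, the functional x ↦ [p3 p4 x] has the sign of C
  have hsign : ∀ y, y ∈ convexHull ℝ ({p3, p4, p6} : Set Plane) →
      0 ≤ det2 (p4 - p3) (y - p3) * det2 (p4 - p3) (p6 - p3) := by
    intro y hy
    rw [mem_tri] at hy
    obtain ⟨α, β, γ, hα, hβ, hγ, hs, hy⟩ := hy
    have e : det2 (p4 - p3) (y - p3) = γ * det2 (p4 - p3) (p6 - p3) := by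
      rw [← hy, det2_combo _ _ _ _ _ _ _ _ hs]
      simp only [det2, PiLp.sub_apply, PiLp.add_apply, PiLp.smul_apply, smul_eq_mul]; ring
    rw [e]
    nlinarith [mul_nonneg hγ hCC.le]
  have h2A : p2 ∈ interior (convexHull ℝ ({p3, p4, p6} : Set Plane)) :=
    interior_mono Set.inter_subset_left h2
  -- p2 is not on the line p3 p4
  have hD2ne : det2 (p4 - p3) (p2 - p3) ≠ 0 := by
    intro hz
    rw [mem_interior_iff_mem_nhds, Metric.mem_nhds_iff] at h2A
    obtain ⟨ε, hε, hball⟩ := h2A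
    set δ : ℝ := ε / (2 * (‖p3 - p6‖ + 1)) with hδdef
    have hδ : 0 < δ := by positivity
    have hqball : p2 + δ • (p3 - p6) ∈ Metric.ball p2 ε := by
      rw [Metric.mem_ball, dist_eq_norm, add_sub_cancel_left, norm_smul,
        Real.norm_eq_abs, abs_of_pos hδ, hδdef, div_mul_eq_mul_div,
        div_lt_iff₀ (by positivity)]
      nlinarith [norm_nonneg (p3 - p6), hε]
    have hq := hsign _ (hball hqball)
    have expand : det2 (p4 - p3) (p2 + δ • (p3 - p6) - p3)
        = det2 (p4 - p3) (p2 - p3) - δ * det2 (p4 - p3) (p6 - p3) := by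
      simp only [det2, PiLp.sub_apply, PiLp.add_apply, PiLp.smul_apply, smul_eq_mul]; ring
    rw [expand, hz, zero_sub] at hq
    nlinarith [hq, hδ, hCC]
  have hL2C : 0 < det2 (p4 - p3) (p2 - p3) * det2 (p4 - p3) (p6 - p3) :=
    lt_of_le_of_ne (hsign p2 (interior_subset h2A)) (mul_ne_zero hD2ne hCne).symm
  -- now the main argument
  ext x
  simp only [Set.mem_inter_iff, Set.mem_singleton_iff]
  constructor
  · rintro ⟨hx1, hx2⟩
    rw [mem_tri] at hx1 hx2
    obtain ⟨l6, l2, l3, hl6, hl2, hl3, hsum1, hxeq1⟩ := hx1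
    obtain ⟨m3, m4, m5, hm3, hm4, hm5, hsum2, hxeq2⟩ := hx2
    have e1 : det2 (p4 - p3) (x - p3)
        = l6 * det2 (p4 - p3) (p6 - p3) + l2 * det2 (p4 - p3) (p2 - p3) := by
      rw [← hxeq1, det2_combo _ _ _ _ _ _ _ _ hsum1]
      simp only [det2, PiLp.sub_apply, PiLp.add_apply, PiLp.smul_apply, smul_eq_mul]; ring
    have e2 : det2 (p4 - p3) (x - p3) = m5 * (-(det2 (p5 - p3) (p4 - p3))) := by
      rw [← hxeq2, det2_combo _ _ _ _ _ _ _ _ hsum2]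
      simp only [det2, PiLp.sub_apply, PiLp.add_apply, PiLp.smul_apply, smul_eq_mul]; ring
    have q : l6 * det2 (p4 - p3) (p6 - p3) + l2 * det2 (p4 - p3) (p2 - p3)
        = m5 * (-(det2 (p5 - p3) (p4 - p3))) := by rw [← e1, e2]
    have key : l6 * (det2 (p4 - p3) (p6 - p3) * det2 (p4 - p3) (p6 - p3))
        + l2 * (det2 (p4 - p3) (p2 - p3) * det2 (p4 - p3) (p6 - p3))
        + m5 * (det2 (p5 - p3) (p4 - p3) * det2 (p4 - p3) (p6 - p3)) = 0 := by
      linear_combination det2 (p4 - p3) (p6 - p3) * q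
    have h6z : l6 = 0 := by
      have h1 : l6 ≤ 0 := by
        nlinarith [key, mul_nonneg hl2 hL2C.le, mul_nonneg hm5 hAC.le, hCC]
      linarith
    have h2z : l2 = 0 := by
      have h1 : l2 ≤ 0 := by
        nlinarith [key, mul_nonneg hl6 hCC.le, mul_nonneg hm5 hAC.le, hL2C]
      linarith
    have h3o : l3 = 1 := by rw [h6z, h2z] at hsum1; linarith
    rw [← hxeq1, h6z, h2z, h3o]
    simp
  · rintro rfl
    exact ⟨subset_convexHull ℝ _ (by simp), subset_convexHull ℝ _ (by simp)⟩
end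
end

section
/- Let P be a set of five points of ℝ² with no three of them collinear. Then exactly one of the following holds: (i) the five points are in convex position; (ii) exactly one point of P lies in the interior of the convex hull of the other four, and those four are in convex position; (iii) exactly two points of P lie in the interior of the triangle spanned by the other three. -/
noncomputable section

/-- No three points of the set `P` are collinear. -/
def NoThreeCollinearSet (P : Set Plane) : Prop :=
  ∀ x ∈ P, ∀ y ∈ P, ∀ z ∈ P, x ≠ y → x ≠ z → y ≠ z →
    ¬ Collinear ℝ ({x, y, z} : Set Plane)

/-- The points of `P` are in convex position: no point of `P` lies in the convex hull
of the remaining ones. -/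
def ConvexPositionSet (P : Set Plane) : Prop :=
  ∀ p ∈ P, p ∉ convexHull ℝ (P \ {p})

/-- Exactly one point of `P` lies in the interior of the convex hull of the other four,
and those four points are in convex position. -/
def OneInteriorPoint (P : Set Plane) : Prop :=
  ∃ p ∈ P, p ∈ interior (convexHull ℝ (P \ {p})) ∧
    (∀ q ∈ P, q ∈ interior (convexHull ℝ (P \ {q})) → q = p) ∧
    ConvexPositionSet (P \ {p})

/-- Exactly two points of `P` lie in the interior of the triangle spanned by the other
three. -/
def TwoInteriorPoints (P : Set Plane) : Prop :=
  ∃ p ∈ P, ∃ q ∈ P, p ≠ q ∧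
    p ∈ interior (convexHull ℝ (P \ {p, q})) ∧
    q ∈ interior (convexHull ℝ (P \ {p, q})) ∧
    ∀ r ∈ P, r ∈ interior (convexHull ℝ (P \ {p, q})) → r = p ∨ r = q

/-!
A point of a finite set `P` lies in the convex hull of the others exactly when it is not an
extreme point of `convexHull ℝ P`, and by Krein–Milman the extreme points `E` already span that
hull. As `P` is not collinear, `E` has at least three points, so at most two points of `P` are not
extreme. Such a point lies in the hull of `E` but on no line through two points of `E`, so by
Carathéodory it lies in the interior of that hull. Zero, one or two non-extreme points give cases
(i), (ii) and (iii) respectively.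
-/

open Set Module

theorem Fintype.exists_forall_eq_or_eq_of_card_le_two {ι : Type*} [Fintype ι] [Nonempty ι]
    (h : Fintype.card ι ≤ 2) : ∃ i j : ι, ∀ k, k = i ∨ k = j := by
  classical
  obtain ⟨i⟩ := ‹Nonempty ι›
  by_cases hj : ∃ j, j ≠ i
  · obtain ⟨j, hji⟩ := hj
    refine ⟨i, j, fun k => ?_⟩
    by_contra! hk
    have := Finset.card_le_univ {i, j, k}
    rw [Finset.card_eq_three.2 ⟨i, j, k, hji.symm, hk.1.symm, hk.2.symm, rfl⟩] at this
    omega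
  · push Not at hj
    exact ⟨i, i, fun k => Or.inl (hj k)⟩

theorem collinear_of_ncard_le_two {k V P : Type*} [Field k] [AddCommGroup V] [Module k V]
    [AddTorsor V P] {s : Set P} (hs : s.Finite) (h : s.ncard ≤ 2) : Collinear k s := by
  interval_cases hn : s.ncard
  · rw [ncard_eq_zero hs] at hn; exact hn ▸ collinear_empty k P
  · obtain ⟨a, rfl⟩ := ncard_eq_one.1 hn; exact collinear_singleton k a
  · obtain ⟨a, b, -, rfl⟩ := ncard_eq_two.1 hn; exact collinear_pair k a b

theorem collinear_convexHull_iff {V : Type*} [AddCommGroup V] [Module ℝ V] {s : Set V} :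
    Collinear ℝ (convexHull ℝ s) ↔ Collinear ℝ s := by
  rw [Collinear, Collinear, ← direction_affineSpan, affineSpan_convexHull, direction_affineSpan]

section NormedSpace

variable {V : Type*} [NormedAddCommGroup V] [NormedSpace ℝ V] {s : Set V}

theorem Set.Finite.convexHull_extremePoints_convexHull (hs : s.Finite) :
    convexHull ℝ ((convexHull ℝ s).extremePoints ℝ) = convexHull ℝ s := by
  have hclosed : IsClosed (convexHull ℝ ((convexHull ℝ s).extremePoints ℝ)) :=
    ((hs.subset extremePoints_convexHull_subset).isCompact_convexHull (𝕜 := ℝ)).isClosed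
  rw [← hclosed.closure_eq]
  exact closure_convexHull_extremePoints (hs.isCompact_convexHull (𝕜 := ℝ))
    (convex_convexHull ℝ s)

theorem Set.Finite.mem_extremePoints_convexHull_iff (hs : s.Finite) {x : V} (hx : x ∈ s) :
    x ∈ (convexHull ℝ s).extremePoints ℝ ↔ x ∉ convexHull ℝ (s \ {x}) := by
  constructor
  · intro hext hmem
    rw [(convex_convexHull ℝ s).mem_extremePoints_iff_mem_sdiff_convexHull_sdiff] at hext
    exact hext.2 (convexHull_mono (sdiff_subset_sdiff_left (subset_convexHull ℝ s)) hmem)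
  · intro hnot
    by_contra hext
    refine hnot (convexHull_mono (subset_sdiff_singleton extremePoints_convexHull_subset hext) ?_)
    rw [hs.convexHull_extremePoints_convexHull]
    exact subset_convexHull ℝ s hx

theorem Set.Finite.three_le_ncard_extremePoints_convexHull (hs : s.Finite)
    (hcol : ¬ Collinear ℝ s) : 3 ≤ ((convexHull ℝ s).extremePoints ℝ).ncard := by
  by_contra! h
  refine hcol (Collinear.subset (subset_convexHull ℝ s) ?_)
  rw [← hs.convexHull_extremePoints_convexHull, collinear_convexHull_iff]
  exact collinear_of_ncard_le_two (hs.subset extremePoints_convexHull_subset) (by omega)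

/-- Carathéodory writes `x` with positive weights on affinely independent points of `s`: three of
them form an affine basis in which `x` has positive coordinates, while fewer would put `x` on a
line through two points of `s`. -/
theorem mem_interior_convexHull_of_forall_notMem_affineSpan_pair (hV : finrank ℝ V = 2)
    {x : V} (hx : x ∈ convexHull ℝ s) (hgen : ∀ u ∈ s, ∀ v ∈ s, x ∉ line[ℝ, u, v]) :
    x ∈ interior (convexHull ℝ s) := by
  have : FiniteDimensional ℝ V := Module.finite_of_finrank_eq_succ hV
  obtain ⟨ι, _, z, w, hzs, hz, hw0, hw1, rfl⟩ := eq_pos_convex_span_of_mem_convexHull hx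
  have hcard : Fintype.card ι ≤ 3 := by
    have := (vectorSpan ℝ (range z)).finrank_le
    have := hz.card_le_finrank_succ
    omega
  rcases hcard.eq_or_lt with h3 | hlt
  · let b : AffineBasis ι ℝ V :=
      ⟨z, hz, hz.affineSpan_eq_top_iff_card_eq_finrank_add_one.2 (by rw [h3, hV])⟩
    refine interior_mono (convexHull_mono hzs) ?_
    change _ ∈ interior (convexHull ℝ (range b))
    rw [b.interior_convexHull]
    intro i
    have := b.coord_apply_combination_of_mem (Finset.mem_univ i) hw1
    rw [Finset.affineCombination_eq_linear_combination _ _ _ hw1] at this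
    exact this ▸ hw0 i
  · have : Nonempty ι := by
      by_contra h
      simp [not_nonempty_iff.1 h] at hw1
    obtain ⟨i, j, hij⟩ := Fintype.exists_forall_eq_or_eq_of_card_le_two (ι := ι) (by omega)
    refine (hgen (z i) (hzs ⟨i, rfl⟩) (z j) (hzs ⟨j, rfl⟩) ?_).elim
    have hsub : range z ⊆ {z i, z j} := by
      rintro _ ⟨k, rfl⟩
      rcases hij k with rfl | rfl <;> simp
    refine convexHull_subset_affineSpan _ (convexHull_mono hsub ?_)
    exact (convex_convexHull ℝ _).sum_mem (fun i _ => (hw0 i).le) hw1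
      (fun i _ => subset_convexHull ℝ _ (mem_range_self i))

end NormedSpace

theorem convexPositionSet_iff_subset_extremePoints {P : Set Plane} (hP : P.Finite) :
    ConvexPositionSet P ↔ P ⊆ (convexHull ℝ P).extremePoints ℝ :=
  forall₂_congr fun _ hx => (hP.mem_extremePoints_convexHull_iff hx).symm

theorem OneInteriorPoint.not_convexPositionSet {P : Set Plane} (h : OneInteriorPoint P) :
    ¬ ConvexPositionSet P := by
  obtain ⟨p, hpP, hpint, -, -⟩ := h
  exact fun hconv => hconv p hpP (interior_subset hpint)

theorem TwoInteriorPoints.not_convexPositionSet {P : Set Plane} (h : TwoInteriorPoints P) :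
    ¬ ConvexPositionSet P := by
  obtain ⟨p, hpP, q, -, -, hpint, -, -⟩ := h
  have hsub : P \ {p, q} ⊆ P \ {p} := sdiff_subset_sdiff_right (by simp)
  exact fun hconv => hconv p hpP (convexHull_mono hsub (interior_subset hpint))

theorem OneInteriorPoint.not_twoInteriorPoints {P : Set Plane} (h : OneInteriorPoint P) :
    ¬ TwoInteriorPoints P := by
  obtain ⟨o, -, -, huniq, -⟩ := h
  rintro ⟨p, hpP, q, hqP, hpq, hpint, hqint, -⟩
  have hp : P \ {p, q} ⊆ P \ {p} := sdiff_subset_sdiff_right (by simp)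
  have hq : P \ {p, q} ⊆ P \ {q} := sdiff_subset_sdiff_right (by simp)
  exact hpq ((huniq p hpP (interior_mono (convexHull_mono hp) hpint)).trans
    (huniq q hqP (interior_mono (convexHull_mono hq) hqint)).symm)

namespace NoThreeCollinearSet

variable {P : Set Plane} (hP : NoThreeCollinearSet P)
include hP

theorem notMem_affineSpan_pair {x u v : Plane} (hx : x ∈ P) (hu : u ∈ P) (hv : v ∈ P)
    (hxu : x ≠ u) (hxv : x ≠ v) : x ∉ line[ℝ, u, v] := by
  intro hline
  rcases eq_or_ne u v with rfl | huv
  · rw [pair_eq_singleton, AffineSubspace.mem_affineSpan_singleton] at hline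
    exact hxu hline
  · exact hP x hx u hu v hv hxu hxv huv (collinear_insert_of_mem_affineSpan_pair hline)

theorem not_collinear (h3 : 3 ≤ P.ncard) : ¬ Collinear ℝ P := by
  obtain ⟨T, hTP, hT⟩ := exists_subset_card_eq h3
  obtain ⟨x, y, z, hxy, hxz, hyz, rfl⟩ := ncard_eq_three.1 hT
  exact fun h => hP x (hTP (by simp)) y (hTP (by simp)) z (hTP (by simp)) hxy hxz hyz
    (h.subset hTP)

variable (hfin : P.Finite)
include hfin

theorem mem_interior_convexHull_extremePoints {x : Plane} (hx : x ∈ P)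
    (hxE : x ∉ (convexHull ℝ P).extremePoints ℝ) :
    x ∈ interior (convexHull ℝ ((convexHull ℝ P).extremePoints ℝ)) := by
  have hxhull : x ∈ convexHull ℝ ((convexHull ℝ P).extremePoints ℝ) := by
    rw [hfin.convexHull_extremePoints_convexHull]
    exact subset_convexHull ℝ P hx
  refine mem_interior_convexHull_of_forall_notMem_affineSpan_pair finrank_euclideanSpace_fin
    hxhull fun u hu v hv => ?_
  exact hP.notMem_affineSpan_pair hx (extremePoints_convexHull_subset hu)
    (extremePoints_convexHull_subset hv) (fun h => hxE (h ▸ hu)) (fun h => hxE (h ▸ hv))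

theorem oneInteriorPoint_of_sdiff_extremePoints_eq_singleton {p : Plane}
    (h : P \ (convexHull ℝ P).extremePoints ℝ = {p}) : OneInteriorPoint P := by
  set E := (convexHull ℝ P).extremePoints ℝ
  have hEP : E ⊆ P := extremePoints_convexHull_subset
  have hp : p ∈ P \ E := h ▸ mem_singleton p
  have hPE : P \ {p} = E := by rw [← h, sdiff_sdiff_cancel_left hEP]
  refine ⟨p, hp.1, hPE ▸ hP.mem_interior_convexHull_extremePoints hfin hp.1 hp.2,
    fun q hq hqint => ?_, ?_⟩
  · have hqE : q ∉ E := fun hqE =>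
      (hfin.mem_extremePoints_convexHull_iff hq).1 hqE (interior_subset hqint)
    have hq' : q ∈ P \ E := ⟨hq, hqE⟩
    rwa [h, mem_singleton_iff] at hq'
  · rw [hPE, convexPositionSet_iff_subset_extremePoints (hfin.subset hEP),
      hfin.convexHull_extremePoints_convexHull]

theorem twoInteriorPoints_of_sdiff_extremePoints_eq_pair {p q : Plane} (hpq : p ≠ q)
    (h : P \ (convexHull ℝ P).extremePoints ℝ = {p, q}) : TwoInteriorPoints P := by
  set E := (convexHull ℝ P).extremePoints ℝ
  have hEP : E ⊆ P := extremePoints_convexHull_subset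
  have hp : p ∈ P \ E := h ▸ mem_insert p {q}
  have hq : q ∈ P \ E := h ▸ mem_insert_of_mem p (mem_singleton q)
  have hPE : P \ {p, q} = E := by rw [← h, sdiff_sdiff_cancel_left hEP]
  refine ⟨p, hp.1, q, hq.1, hpq, hPE ▸ hP.mem_interior_convexHull_extremePoints hfin hp.1 hp.2,
    hPE ▸ hP.mem_interior_convexHull_extremePoints hfin hq.1 hq.2, fun r hr hrint => ?_⟩
  rw [hPE, hfin.convexHull_extremePoints_convexHull] at hrint
  have hrE : r ∉ E := disjoint_left.1 (disjoint_interior_extremePoints _) hrint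
  have hr' : r ∈ P \ E := ⟨hr, hrE⟩
  rwa [h, mem_insert_iff, mem_singleton_iff] at hr'

end NoThreeCollinearSet

/-- Trichotomy for five points in general position in the plane: exactly one of the
following holds: (i) the five points are in convex position; (ii) exactly one point lies
in the interior of the convex hull of the other four, which are in convex position;
(iii) exactly two points lie in the interior of the triangle spanned by the other
three. -/
theorem five_points_trichotomy
    (P : Set Plane) (hcard : P.ncard = 5) (hcol : NoThreeCollinearSet P) :
    (ConvexPositionSet P ∧ ¬ OneInteriorPoint P ∧ ¬ TwoInteriorPoints P) ∨
    (¬ ConvexPositionSet P ∧ OneInteriorPoint P ∧ ¬ TwoInteriorPoints P) ∨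
    (¬ ConvexPositionSet P ∧ ¬ OneInteriorPoint P ∧ TwoInteriorPoints P) := by
  have hfin : P.Finite := finite_of_ncard_ne_zero (by omega)
  set E := (convexHull ℝ P).extremePoints ℝ
  have hEP : E ⊆ P := extremePoints_convexHull_subset
  have hE : 3 ≤ E.ncard :=
    hfin.three_le_ncard_extremePoints_convexHull (hcol.not_collinear (by omega))
  have hnonext : (P \ E).ncard ≤ 2 := by rw [ncard_sdiff hEP (hfin.subset hEP)]; omega
  interval_cases hn : (P \ E).ncard
  · have hconv : ConvexPositionSet P := (convexPositionSet_iff_subset_extremePoints hfin).2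
      (sdiff_eq_empty.1 ((ncard_eq_zero hfin.sdiff).1 hn))
    exact Or.inl ⟨hconv, fun h1 => h1.not_convexPositionSet hconv,
      fun h2 => h2.not_convexPositionSet hconv⟩
  · obtain ⟨p, hp⟩ := ncard_eq_one.1 hn
    have h1 := hcol.oneInteriorPoint_of_sdiff_extremePoints_eq_singleton hfin hp
    exact Or.inr (Or.inl ⟨h1.not_convexPositionSet, h1, h1.not_twoInteriorPoints⟩)
  · obtain ⟨p, q, hpq, hpq'⟩ := ncard_eq_two.1 hn
    have h2 := hcol.twoInteriorPoints_of_sdiff_extremePoints_eq_pair hfin hpq hpq'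
    exact Or.inr (Or.inr ⟨h2.not_convexPositionSet, fun h1 => h1.not_twoInteriorPoints h2, h2⟩)
end
end

section
/- Let p2, p3, p4, p5, p6 be points of ℝ² in convex position with no three collinear, and suppose that for some index i (taken cyclically in the cyclic sequence (2,3,4,5,6)) the points p_i and p_{i+1} are adjacent vertices of the convex pentagon with vertex set {p2, …, p6}. Then the interiors of the five consecutive triangles conv{p2,p3,p4}, conv{p3,p4,p5}, conv{p4,p5,p6}, conv{p5,p6,p2}, conv{p6,p2,p3} have empty common intersection. -/
noncomputable section

/-- `f i` and `f j` are adjacent vertices of the convex hull of the family `f`: all the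
remaining points of the family lie strictly on one side of the line through them. -/
def AdjacentVertices {n : ℕ} (f : Fin n → Plane) (i j : Fin n) : Prop :=
  (∀ k, k ≠ i → k ≠ j → 0 < det2 (f j - f i) (f k - f i)) ∨
  (∀ k, k ≠ i → k ≠ j → det2 (f j - f i) (f k - f i) < 0)

/-!
Call the five points `a, b, c, d, e` in cyclic order, starting with the adjacent pair, so that
`c, d, e` lie strictly on one side of the line `ab`; measure sides by the sign `σ` of the
orientation determinant. A point `x` interior to the triangles `abc`, `bcd`, `dea`, `eab` lies
on side `σ` of the edges of `abc` and of `ea`. Since `x` is also interior to `bcd` and `dea`,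
these triangles have orientation `σ` too, so `x` lies on side `σ` of `ad` as well. A Plücker
relation among the orientations at `x` then puts `d` on side `σ` of `ca`, so `d` is on side `σ`
of all three edges of `abc`: `d ∈ conv {a, b, c}`, against convex position.
-/

open Filter Topology

def orient (p q r : Plane) : ℝ := det2 (q - p) (r - p)

theorem orient_eq (p q r : Plane) :
    orient p q r = (q 0 - p 0) * (r 1 - p 1) - (q 1 - p 1) * (r 0 - p 0) := by
  simp [orient, det2]

theorem orient_rotate (p q r : Plane) : orient q r p = orient p q r := by
  simp only [orient_eq]; ring

theorem orient_smul_add_smul (a b y z : Plane) {s t : ℝ} (hst : s + t = 1) :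
    orient a b (s • y + t • z) = s * orient a b y + t * orient a b z := by
  obtain rfl : t = 1 - s := by linarith
  simp only [orient_eq, PiLp.add_apply, PiLp.smul_apply, smul_eq_mul]
  ring

theorem orient_add_orient_add_orient (a b c d : Plane) :
    orient d b c + orient a d c + orient a b d = orient a b c := by
  simp only [orient_eq]; ring

-- Cramer's rule: the barycentric coordinates of `d` with respect to `a b c`.
theorem orient_smul_eq (a b c d : Plane) :
    orient a b c • d = orient d b c • a + orient a d c • b + orient a b d • c := by
  ext i; fin_cases i <;> simp [orient_eq] <;> ring

theorem orient_plucker (a b c d x : Plane) :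
    orient a b c * orient a d x + orient a b d * orient c a x =
      orient a b x * orient a d c := by
  simp only [orient_eq]; ring

theorem orient_ne_zero_of_not_collinear {a b c : Plane}
    (h : ¬ Collinear ℝ ({a, b, c} : Set Plane)) : orient a b c ≠ 0 := by
  contrapose! h
  rcases eq_or_ne a b with rfl | hab
  · simpa using collinear_pair ℝ a c
  have hn : (b 0 - a 0) ^ 2 + (b 1 - a 1) ^ 2 ≠ 0 := by
    have := EuclideanSpace.real_norm_sq_eq (b - a)
    simp only [Fin.sum_univ_two, PiLp.sub_apply] at this
    rw [← this]
    exact pow_ne_zero 2 (norm_ne_zero_iff.2 (sub_ne_zero.2 hab.symm))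
  -- the parameter of the orthogonal projection of `c` onto the line `ab`
  have hc : c = AffineMap.lineMap a b
      (((c 0 - a 0) * (b 0 - a 0) + (c 1 - a 1) * (b 1 - a 1)) /
        ((b 0 - a 0) ^ 2 + (b 1 - a 1) ^ 2)) := by
    rw [orient_eq] at h
    ext i; fin_cases i <;> simp [AffineMap.lineMap_apply] <;> field_simp
    · linear_combination (a 1 - b 1) * h
    · linear_combination (b 0 - a 0) * h
  rw [Set.pair_comm b c, Set.insert_comm a c]
  exact collinear_insert_of_mem_affineSpan_pair (hc ▸ AffineMap.lineMap_mem_affineSpan_pair _ _ _)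

theorem mul_pos_of_mul_pos_of_mul_pos {a b c : ℝ} (hac : 0 < a * c) (hbc : 0 < b * c) :
    0 < a * b :=
  pos_of_mul_pos_left (a := a * b) (b := c * c) (by nlinarith [mul_pos hac hbc]) (mul_self_nonneg c)

theorem pos_of_mem_interior {E : Type*} [NormedAddCommGroup E] [NormedSpace ℝ E]
    {s : Set E} {f : E → ℝ} {x v : E} {k : ℝ} (hs : ∀ y ∈ s, 0 ≤ f y) (hk : 0 < k)
    (hv : ∀ t : ℝ, f (x + t • v) = f x - t * k) (hx : x ∈ interior s) : 0 < f x := by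
  by_contra! hfx
  have hline : Tendsto (fun t : ℝ => x + t • v) (𝓝 0) (𝓝 x) :=
    (by fun_prop : Continuous fun t : ℝ => x + t • v).tendsto' 0 x (by simp)
  have hev : ∀ᶠ t in 𝓝[>] (0 : ℝ), x + t • v ∈ s :=
    nhdsWithin_le_nhds (hline (mem_interior_iff_mem_nhds.1 hx))
  obtain ⟨t, hts, ht⟩ := (hev.and self_mem_nhdsWithin).exists
  have := hs _ hts
  rw [hv] at this
  nlinarith [mul_pos (Set.mem_Ioi.1 ht) hk]

theorem mul_orient_pos_of_mem_interior {σ : ℝ} {a b c x : Plane} (hσ : 0 < σ * orient a b c)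
    (hx : x ∈ interior (convexHull ℝ {a, b, c})) : 0 < σ * orient a b x := by
  have hhull : convexHull ℝ {a, b, c} ⊆ {y | 0 ≤ σ * orient a b y} := by
    refine convexHull_min ?_ fun y hy z hz s t hs ht hst => ?_
    · rintro p (rfl | rfl | rfl)
      · simp [orient_eq]
      · simp [orient_eq, mul_comm]
      · exact hσ.le
    · simp only [Set.mem_ofPred_eq, orient_smul_add_smul a b y z hst] at hy hz ⊢
      nlinarith [mul_nonneg hs hy, mul_nonneg ht hz]
  refine pos_of_mem_interior (f := fun y => σ * orient a b y) (v := a - c) (fun y hy => hhull hy)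
    hσ (fun t => ?_) hx
  simp only [orient_eq, PiLp.add_apply, PiLp.smul_apply, PiLp.sub_apply, smul_eq_mul]
  ring

theorem mul_orient_pos_of_mem_interior_triangle {σ : ℝ} {a b c x : Plane}
    (hσ : 0 < σ * orient a b c) (hx : x ∈ interior (convexHull ℝ {a, b, c})) :
    0 < σ * orient a b x ∧ 0 < σ * orient b c x ∧ 0 < σ * orient c a x := by
  have hbca : ({a, b, c} : Set Plane) = {b, c, a} := by rw [Set.insert_comm, Set.pair_comm]
  have hcab : ({a, b, c} : Set Plane) = {c, a, b} := by rw [Set.pair_comm b c, Set.insert_comm]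
  refine ⟨mul_orient_pos_of_mem_interior hσ hx, ?_, ?_⟩
  · exact mul_orient_pos_of_mem_interior (by rwa [orient_rotate a b c]) (hbca ▸ hx)
  · exact mul_orient_pos_of_mem_interior (by rwa [orient_rotate b c a, orient_rotate a b c])
      (hcab ▸ hx)

theorem mem_convexHull_of_orient_nonneg {σ : ℝ} {a b c d : Plane} (hS : 0 < σ * orient a b c)
    (ha : 0 ≤ σ * orient d b c) (hb : 0 ≤ σ * orient a d c) (hc : 0 ≤ σ * orient a b d) :
    d ∈ convexHull ℝ {a, b, c} := by
  have hsum : ∑ i, ![σ * orient d b c, σ * orient a d c, σ * orient a b d] i = σ * orient a b c := by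
    simp [Fin.sum_univ_three, ← orient_add_orient_add_orient a b c d]; ring
  have hd : Finset.univ.centerMass ![σ * orient d b c, σ * orient a d c, σ * orient a b d]
      ![a, b, c] = d := by
    rw [Finset.centerMass, hsum, Fin.sum_univ_three]
    simp only [Matrix.cons_val_zero, Matrix.cons_val_one, Matrix.cons_val_two, Matrix.tail_cons,
      Matrix.head_cons]
    rw [mul_smul, mul_smul, mul_smul, ← smul_add, ← smul_add, ← orient_smul_eq, smul_smul,
      smul_smul, mul_assoc, inv_mul_cancel₀ hS.ne', one_smul]
  rw [← hd]
  refine Finset.centerMass_mem_convexHull _ (fun i _ => ?_) (hsum ▸ hS) (fun i _ => ?_)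
  · fin_cases i <;> assumption
  · fin_cases i <;> simp

theorem mem_convexHull_of_mem_interiors {σ : ℝ} {a b c d e x : Plane}
    (hc : 0 < σ * orient a b c) (hd : 0 < σ * orient a b d) (he : 0 < σ * orient a b e)
    (hbcd : orient b c d ≠ 0) (hdea : orient d e a ≠ 0)
    (hxabc : x ∈ interior (convexHull ℝ {a, b, c}))
    (hxbcd : x ∈ interior (convexHull ℝ {b, c, d}))
    (hxdea : x ∈ interior (convexHull ℝ {d, e, a}))
    (hxeab : x ∈ interior (convexHull ℝ {e, a, b})) :
    d ∈ convexHull ℝ {a, b, c} := by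
  obtain ⟨habx, hbcx, hcax⟩ := mul_orient_pos_of_mem_interior_triangle hc hxabc
  have heax : 0 < σ * orient e a x :=
    (mul_orient_pos_of_mem_interior_triangle (by rwa [← orient_rotate e a b]) hxeab).1
  have hσbcd : 0 < σ * orient b c d := mul_pos_of_mul_pos_of_mul_pos hbcx
    (mul_orient_pos_of_mem_interior_triangle (mul_self_pos.2 hbcd) hxbcd).1
  have hσdea : 0 < σ * orient d e a := mul_pos_of_mul_pos_of_mul_pos heax
    (mul_orient_pos_of_mem_interior_triangle (mul_self_pos.2 hdea) hxdea).2.1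
  have hadx : 0 < σ * orient a d x := (mul_orient_pos_of_mem_interior_triangle hσdea hxdea).2.2
  have key : (σ * orient a b x) * (σ * orient a d c) =
      (σ * orient a b c) * (σ * orient a d x) + (σ * orient a b d) * (σ * orient c a x) := by
    linear_combination σ ^ 2 * (orient_plucker a b c d x).symm
  have hadc : 0 < σ * orient a d c :=
    pos_of_mul_pos_right (key ▸ add_pos (mul_pos hc hadx) (mul_pos hd hcax)) habx.le
  exact mem_convexHull_of_orient_nonneg hc (orient_rotate d b c ▸ hσbcd.le) hadc.le hd.le

theorem AdjacentVertices.exists_sign {n : ℕ} {f : Fin n → Plane} {i j : Fin n}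
    (h : AdjacentVertices f i j) :
    ∃ σ : ℝ, ∀ k, k ≠ i → k ≠ j → 0 < σ * orient (f i) (f j) (f k) := by
  rcases h with h | h
  · exact ⟨1, fun k hki hkj => by simpa [orient] using h k hki hkj⟩
  · exact ⟨-1, fun k hki hkj => by simpa [orient] using h k hki hkj⟩

theorem ConvexPosition.notMem_convexHull_triple {n : ℕ} {f : Fin n → Plane}
    (h : ConvexPosition f) {i j k l : Fin n} (hj : j ≠ i) (hk : k ≠ i) (hl : l ≠ i) :
    f i ∉ convexHull ℝ {f j, f k, f l} := fun hmem =>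
  h i (convexHull_mono (by rintro _ (rfl | rfl | rfl) <;> exact ⟨_, ‹_›, rfl⟩) hmem)

theorem iInter_interior_convexHull_eq_empty {f : Fin 5 → Plane} (hcol : NoThreeCollinear f)
    (hconv : ConvexPosition f) {i : Fin 5} (hadj : AdjacentVertices f i (i + 1)) :
    ⋂ j, interior (convexHull ℝ {f j, f (j + 1), f (j + 2)}) = ∅ := by
  obtain ⟨σ, hσ⟩ := hadj.exists_sign
  have hnd (j : Fin 5) : orient (f j) (f (j + 1)) (f (j + 2)) ≠ 0 :=
    orient_ne_zero_of_not_collinear (hcol _ _ _ (by simp) (by simp) (by simp))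
  refine Set.eq_empty_of_forall_notMem fun x hx => ?_
  rw [Set.mem_iInter] at hx
  refine hconv.notMem_convexHull_triple (i := i + 3) (j := i) (k := i + 1) (l := i + 2)
    (by simp) (by simp) (by simp) ?_
  refine mem_convexHull_of_mem_interiors (hσ (i + 2) (by simp) (by simp))
    (hσ (i + 3) (by simp) (by simp)) (hσ (i + 4) (by simp) (by simp)) ?_ ?_ (hx i) ?_ ?_ ?_
  · simpa [add_assoc] using hnd (i + 1)
  · simpa [add_assoc] using hnd (i + 3)
  · simpa [add_assoc] using hx (i + 1)
  · simpa [add_assoc] using hx (i + 3)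
  · simpa [add_assoc] using hx (i + 4)

/-- The exclusion argument of Case 1 of Lemma 3: if `p2, …, p6` are in convex position,
no three collinear, and two consecutive points of the cyclic sequence `(2,3,4,5,6)` are
adjacent vertices of the convex pentagon, then the interiors of the five consecutive
triangles have empty common intersection. -/
theorem consecutive_adjacent_empty_intersection
    (p2 p3 p4 p5 p6 : Plane)
    (hcol : NoThreeCollinear ![p2, p3, p4, p5, p6])
    (hconv : ConvexPosition ![p2, p3, p4, p5, p6])
    (hadj : ∃ i : Fin 5, AdjacentVertices ![p2, p3, p4, p5, p6] i (i + 1)) :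
    interior (convexHull ℝ ({p2, p3, p4} : Set Plane)) ∩
      interior (convexHull ℝ ({p3, p4, p5} : Set Plane)) ∩
      interior (convexHull ℝ ({p4, p5, p6} : Set Plane)) ∩
      interior (convexHull ℝ ({p5, p6, p2} : Set Plane)) ∩
      interior (convexHull ℝ ({p6, p2, p3} : Set Plane)) = ∅ := by
  obtain ⟨i, hi⟩ := hadj
  refine Set.eq_empty_of_forall_notMem fun x ⟨⟨⟨⟨h₀, h₁⟩, h₂⟩, h₃⟩, h₄⟩ => ?_
  refine Set.eq_empty_iff_forall_notMem.1 (iInter_interior_convexHull_eq_empty hcol hconv hi) x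
    (Set.mem_iInter.2 fun j => ?_)
  fin_cases j <;> assumption
end
end

section
/- Let p1, p2, p3, p4, p5, p6 be points of ℝ² with no three of them collinear. Suppose p1 lies in the interior of each of the five consecutive triangles conv{p2,p3,p4}, conv{p3,p4,p5}, conv{p4,p5,p6}, conv{p5,p6,p2}, conv{p6,p2,p3}, and that exactly two of the points p2, …, p6 lie in the interior of the triangle spanned by the other three. Then the two interior points are consecutive in the cyclic sequence (p2, p3, p4, p5, p6), i.e. they are {p_i, p_{i+1}} for some index i taken cyclically in (2,3,4,5,6). -/
/-! Write `p k` for the cyclic sequence `p2, …, p6`, indexed by `Fin 5`. If the two interior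
points are `p k` and `p (k + 2)`, then `p k` lies in the triangle `p (k + 1), p (k + 3), p (k + 4)`.
Hence `p (k + 3)` and `p (k + 1)` lie strictly on opposite sides of the line through `p (k + 4)`
and `p k`, and so do the interiors of the two triangles on that common edge, although both
contain `p1`. A side of a line is the sign of a nonconstant affine functional vanishing on it,
which is an open map; this is why the interior of a triangle lies strictly on one side. -/

noncomputable section

open Set Module

theorem exists_affineMap_linear_ne_zero_apply_eq_zero {k V : Type*} [Field k] [AddCommGroup V]
    [Module k V] (hV : 2 ≤ finrank k V) (x y : V) :
    ∃ f : V →ᵃ[k] k, f.linear ≠ 0 ∧ f x = 0 ∧ f y = 0 := by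
  obtain ⟨φ, hφ, hker⟩ := (k ∙ (y - x)).exists_le_ker_of_lt_top
    (span_lt_top_of_card_lt_finrank (by simpa using hV.trans_lt' one_lt_two))
  refine ⟨φ.toAffineMap - AffineMap.const k V (φ x), by simpa using hφ, by simp, ?_⟩
  have : φ (y - x) = 0 := hker (Submodule.mem_span_singleton_self _)
  simpa [sub_eq_zero] using this

theorem AffineMap.eq_of_mem_convexHull_of_apply_eq_zero {V : Type*} [AddCommGroup V]
    [Module ℝ V] {f : V →ᵃ[ℝ] ℝ} {a b d x : V} (hb : f b = 0) (had : 0 < f a * f d)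
    (hx : x ∈ convexHull ℝ {b, a, d}) (hfx : f x = 0) : x = b := by
  rw [convexHull_insert (insert_nonempty _ _), convexJoin_singleton_left, mem_iUnion₂,
    convexHull_pair] at hx
  obtain ⟨z, hz, hxz⟩ := hx
  have hside : Convex ℝ {y | 0 < f a * f y} := (convex_Ioi (0 : ℝ)).affine_preimage (f a • f)
  have hfz : 0 < f a * f z :=
    hside.segment_subset (mul_self_pos.mpr (left_ne_zero_of_mul had.ne')) had hz
  rw [segment_eq_image_lineMap] at hxz
  obtain ⟨s, -, rfl⟩ := hxz
  rw [f.apply_lineMap, hb, AffineMap.lineMap_apply_ring', sub_zero, add_zero] at hfx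
  rw [(mul_eq_zero.mp hfx).resolve_right (right_ne_zero_of_mul hfz.ne'),
    AffineMap.lineMap_apply_zero]

section

variable {E : Type*} [NormedAddCommGroup E] [NormedSpace ℝ E] [FiniteDimensional ℝ E]

theorem AffineMap.interior_preimage_of_linear_ne_zero {f : E →ᵃ[ℝ] ℝ} (hf : f.linear ≠ 0)
    (s : Set ℝ) : interior (f ⁻¹' s) = f ⁻¹' interior s :=
  ((AffineMap.isOpenMap_linear_iff.mp (f.linear.isOpenMap_of_finiteDimensional
    (LinearMap.surjective_of_ne_zero hf))).preimage_interior_eq_interior_preimage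
    f.continuous_of_finiteDimensional s).symm

theorem AffineMap.mul_pos_of_mem_interior_convexHull {f : E →ᵃ[ℝ] ℝ} (hf : f.linear ≠ 0)
    {a b c q : E} (hb : f b = 0) (hc : f c = 0)
    (hq : q ∈ interior (convexHull ℝ {a, b, c})) : 0 < f a * f q := by
  have hsub : convexHull ℝ {a, b, c} ⊆ f ⁻¹' uIcc (f a) 0 := by
    rw [← image_subset_iff, f.image_convexHull, image_insert_eq, image_pair, hb, hc,
      pair_eq_singleton, convexHull_pair, segment_eq_uIcc]
  have hfq := interior_mono hsub hq
  rw [f.interior_preimage_of_linear_ne_zero hf, uIcc, interior_Icc] at hfq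
  rcases le_total (f a) 0 with h | h <;> simp [h] at hfq <;> nlinarith

theorem disjoint_interior_convexHull_of_mem_convexHull (hE : 2 ≤ finrank ℝ E) {a b c d : E}
    (hc : c ∈ convexHull ℝ {b, a, d}) :
    Disjoint (interior (convexHull ℝ {a, b, c})) (interior (convexHull ℝ {b, c, d})) := by
  refine disjoint_left.mpr fun q habc hbcd => ?_
  have hbc : b ≠ c := by
    rintro rfl
    obtain ⟨g, hg, hga, hgb⟩ := exists_affineMap_linear_ne_zero_apply_eq_zero hE a b
    simpa [hga] using g.mul_pos_of_mem_interior_convexHull hg hgb hgb habc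
  obtain ⟨f, hf, hfb, hfc⟩ := exists_affineMap_linear_ne_zero_apply_eq_zero hE b c
  have hqa := f.mul_pos_of_mem_interior_convexHull hf hfb hfc habc
  have hqd := f.mul_pos_of_mem_interior_convexHull hf hfb hfc (a := d) (q := q)
    (by rwa [insert_comm d b, pair_comm d c])
  have had : 0 < f a * f d := by nlinarith [mul_pos hqa hqd, sq_nonneg (f q)]
  exact hbc (f.eq_of_mem_convexHull_of_apply_eq_zero hfb had hc hfc).symm

end

theorem Fin.setOf_ne_and_ne_add_two (k : Fin 5) :
    {l | l ≠ k ∧ l ≠ k + 2} = {k + 4, k + 3, k + 1} := by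
  ext l
  simp only [mem_ofPred_eq, mem_insert_iff, mem_singleton_iff]
  revert k l
  decide

theorem Fin.eq_add_one_or_add_two_of_ne {i j : Fin 5} (hij : i ≠ j) :
    j = i + 1 ∨ i = j + 1 ∨ j = i + 2 ∨ i = j + 2 := by
  revert i j
  decide

theorem case3_interior_points_consecutive_general
    (p1 p2 p3 p4 p5 p6 : Plane)
    (h1 : p1 ∈ interior (convexHull ℝ ({p2, p3, p4} : Set Plane)))
    (h2 : p1 ∈ interior (convexHull ℝ ({p3, p4, p5} : Set Plane)))
    (h3 : p1 ∈ interior (convexHull ℝ ({p4, p5, p6} : Set Plane)))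
    (h4 : p1 ∈ interior (convexHull ℝ ({p5, p6, p2} : Set Plane)))
    (h5 : p1 ∈ interior (convexHull ℝ ({p6, p2, p3} : Set Plane)))
    (i j : Fin 5) (hij : i ≠ j)
    (hi : ![p2, p3, p4, p5, p6] i ∈
      interior (convexHull ℝ (![p2, p3, p4, p5, p6] '' {k | k ≠ i ∧ k ≠ j})))
    (hj : ![p2, p3, p4, p5, p6] j ∈
      interior (convexHull ℝ (![p2, p3, p4, p5, p6] '' {k | k ≠ i ∧ k ≠ j}))) :
    j = i + 1 ∨ i = j + 1 := by
  set p := ![p2, p3, p4, p5, p6]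
  have hp : ∀ k, p1 ∈ interior (convexHull ℝ {p k, p (k + 1), p (k + 2)}) := by
    intro k
    fin_cases k
    exacts [h1, h2, h3, h4, h5]
  have hnot : ∀ k, p k ∉ interior (convexHull ℝ (p '' {l | l ≠ k ∧ l ≠ k + 2})) := by
    intro k hk
    rw [Fin.setOf_ne_and_ne_add_two, image_insert_eq, image_pair] at hk
    exact disjoint_left.mp (disjoint_interior_convexHull_of_mem_convexHull (by simp)
      (interior_subset hk)) (by simpa [add_assoc] using hp (k + 3))
      (by simpa [add_assoc] using hp (k + 4))
  rcases Fin.eq_add_one_or_add_two_of_ne hij with h | h | rfl | rfl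
  · exact Or.inl h
  · exact Or.inr h
  · exact (hnot i hi).elim
  · exact (hnot j (by simpa only [and_comm] using hj)).elim

/-- First step of Case 3 of Lemma 3: if `p1` lies in the interior of the five
consecutive triangles and two of the points `p2, …, p6` lie in the interior of the
triangle spanned by the other three, then those two points are consecutive in the
cyclic sequence `(p2, p3, p4, p5, p6)`. -/
theorem case3_interior_points_consecutive
    (p1 p2 p3 p4 p5 p6 : Plane)
    (hcol : NoThreeCollinear ![p1, p2, p3, p4, p5, p6])
    (h1 : p1 ∈ interior (convexHull ℝ ({p2, p3, p4} : Set Plane)))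
    (h2 : p1 ∈ interior (convexHull ℝ ({p3, p4, p5} : Set Plane)))
    (h3 : p1 ∈ interior (convexHull ℝ ({p4, p5, p6} : Set Plane)))
    (h4 : p1 ∈ interior (convexHull ℝ ({p5, p6, p2} : Set Plane)))
    (h5 : p1 ∈ interior (convexHull ℝ ({p6, p2, p3} : Set Plane)))
    (i j : Fin 5) (hij : i ≠ j)
    (hi : ![p2, p3, p4, p5, p6] i ∈
      interior (convexHull ℝ (![p2, p3, p4, p5, p6] '' {k | k ≠ i ∧ k ≠ j})))
    (hj : ![p2, p3, p4, p5, p6] j ∈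
      interior (convexHull ℝ (![p2, p3, p4, p5, p6] '' {k | k ≠ i ∧ k ≠ j}))) :
    j = i + 1 ∨ i = j + 1 :=
  case3_interior_points_consecutive_general p1 p2 p3 p4 p5 p6 h1 h2 h3 h4 h5 i j hij hi hj
end
end
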